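/- For every y = (y₁,y₂,y₃) ∈ ℂ³ with Im y₁ ∈ (-π,0), Im y₂ ∈ (0,π), Im y₃ ∈ (-π,0), the complex 3×3 matrix H(y) := 2iQ + i·diag(-1/(1+e^{-y₁}), 1/(1+e^{-y₂}), -3/(1+e^{-y₃})) has nonzero determinant (in particular 1 + e^{-y_j} ≠ 0 for j = 1,2,3). -/
import Mathlib


open Real

/-- The real symmetric matrix `Q` (viewed in `ℂ`). -/
noncomputable def Qmat : Matrix (Fin 3) (Fin 3) ℂ :=
  !![1, -1/2, 0; -1/2, 0, 1/2; 0, 1/2, 1/2]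

lemma exp_im_pos' {y : ℂ} (h : y.im ∈ Set.Ioo (-π) 0) :
    0 < (Complex.exp (-y)).im := by
  rw [Complex.exp_im]
  apply mul_pos (Real.exp_pos _)
  simp only [Complex.neg_im]
  exact Real.sin_pos_of_pos_of_lt_pi (by linarith [h.2]) (by linarith [h.1])

lemma exp_im_neg' {y : ℂ} (h : y.im ∈ Set.Ioo 0 π) :
    (Complex.exp (-y)).im < 0 := by
  rw [Complex.exp_im]
  apply mul_neg_of_pos_of_neg (Real.exp_pos _)
  simp only [Complex.neg_im]
  have := Real.sin_pos_of_pos_of_lt_pi h.1 h.2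
  simpa using neg_neg_of_pos this

lemma one_add_ne' {t : ℂ} (ht : t.im ≠ 0) : 1 + t ≠ 0 := by
  intro h
  apply ht
  have : (1 + t).im = 0 := by rw [h]; simp
  simpa using this

lemma inv_im_neg' {t : ℂ} (ht : 0 < t.im) : ((1 + t)⁻¹).im < 0 := by
  rw [Complex.inv_im]
  have h0 : (1 + t) ≠ 0 := one_add_ne' ht.ne'
  have hn : 0 < Complex.normSq (1 + t) := Complex.normSq_pos.2 h0
  have him : (1 + t).im = t.im := by simp
  rw [him]
  exact div_neg_of_neg_of_pos (by linarith) hn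

lemma key_ne_zero {d₁ d₂ d₃ : ℂ} (h1 : 0 < d₁.im) (h2 : 0 < d₂.im) (h3 : 0 < d₃.im) :
    (2 + d₁) * (d₂ * (1 + d₃) - 1) - (1 + d₃) ≠ 0 := by
  intro h
  have h21 : (2 + d₁) ≠ 0 := by
    intro hc
    have : (2 + d₁).im = 0 := by rw [hc]; simp
    simp at this; linarith
  have h13 : (1 + d₃) ≠ 0 := one_add_ne' h3.ne'
  have hd2 : d₂ = (2 + d₁)⁻¹ + (1 + d₃)⁻¹ := by
    field_simp
    linear_combination h
  have i1 : ((2 + d₁)⁻¹).im < 0 := by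
    rw [Complex.inv_im]
    have hn : 0 < Complex.normSq (2 + d₁) := Complex.normSq_pos.2 h21
    have him : (2 + d₁).im = d₁.im := by simp
    rw [him]
    exact div_neg_of_neg_of_pos (by linarith) hn
  have i3 : ((1 + d₃)⁻¹).im < 0 := inv_im_neg' h3
  have : d₂.im = ((2 + d₁)⁻¹).im + ((1 + d₃)⁻¹).im := by rw [hd2, Complex.add_im]
  linarith

lemma det_eq_aux (d₁ d₂ d₃ : ℂ) :
    ((2 * Complex.I) • Qmat + Complex.I • Matrix.diagonal ![d₁, d₂, d₃]).det =
      Complex.I ^ 3 * ((2 + d₁) * (d₂ * (1 + d₃) - 1) - (1 + d₃)) := by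
  have hm : (2 * Complex.I) • Qmat + Complex.I • Matrix.diagonal ![d₁, d₂, d₃] =
      Complex.I • !![2 + d₁, -1, 0; -1, d₂, 1; 0, 1, 1 + d₃] := by
    ext i j
    fin_cases i <;> fin_cases j <;>
      simp [Qmat, Matrix.diagonal_apply, Matrix.smul_apply, Matrix.add_apply,
        Matrix.vecHead, Matrix.vecTail] <;> ring
  rw [hm, Matrix.det_smul]
  simp [Matrix.det_fin_three, Matrix.vecHead, Matrix.vecTail]
  ring

/-- for `y` in the domain `𝒰`, the matrix
`H(y) = 2iQ + i·diag(-1/(1+e^{-y₁}), 1/(1+e^{-y₂}), -3/(1+e^{-y₃}))`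
has nonzero determinant (in particular the denominators are nonzero). -/
theorem hessian_matrix_det_ne_zero (y₁ y₂ y₃ : ℂ)
    (h₁ : y₁.im ∈ Set.Ioo (-π) 0) (h₂ : y₂.im ∈ Set.Ioo 0 π)
    (h₃ : y₃.im ∈ Set.Ioo (-π) 0) :
    (1 + Complex.exp (-y₁) ≠ 0 ∧ 1 + Complex.exp (-y₂) ≠ 0 ∧
      1 + Complex.exp (-y₃) ≠ 0) ∧
    ((2 * Complex.I) • Qmat + Complex.I • Matrix.diagonal
        ![-1 / (1 + Complex.exp (-y₁)), 1 / (1 + Complex.exp (-y₂)),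
          -3 / (1 + Complex.exp (-y₃))]).det ≠ 0 := by
  have e1 := exp_im_pos' h₁
  have e2 := exp_im_neg' h₂
  have e3 := exp_im_pos' h₃
  have n1 : 1 + Complex.exp (-y₁) ≠ 0 := one_add_ne' e1.ne'
  have n2 : 1 + Complex.exp (-y₂) ≠ 0 := one_add_ne' e2.ne
  have n3 : 1 + Complex.exp (-y₃) ≠ 0 := one_add_ne' e3.ne'
  refine ⟨⟨n1, n2, n3⟩, ?_⟩
  set d₁ : ℂ := -1 / (1 + Complex.exp (-y₁)) with hd1
  set d₂ : ℂ := 1 / (1 + Complex.exp (-y₂)) with hd2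
  set d₃ : ℂ := -3 / (1 + Complex.exp (-y₃)) with hd3
  have p1 : 0 < d₁.im := by
    rw [hd1, neg_div, Complex.neg_im, one_div]
    have := inv_im_neg' e1
    linarith
  have p2 : 0 < d₂.im := by
    rw [hd2, one_div, Complex.inv_im]
    have h0 : 0 < Complex.normSq (1 + Complex.exp (-y₂)) := Complex.normSq_pos.2 n2
    have him : (1 + Complex.exp (-y₂)).im = (Complex.exp (-y₂)).im := by simp
    rw [him]
    exact div_pos (by linarith) h0
  have p3 : 0 < d₃.im := by
    have hrw : d₃ = (-3) * (1 + Complex.exp (-y₃))⁻¹ := by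
      rw [hd3, div_eq_mul_inv]
    rw [hrw, Complex.mul_im]
    have h := inv_im_neg' e3
    have hre : ((-3 : ℂ)).re = -3 := by norm_num
    have him0 : ((-3 : ℂ)).im = 0 := by norm_num
    rw [hre, him0]
    nlinarith
  rw [det_eq_aux]
  exact mul_ne_zero (pow_ne_zero _ Complex.I_ne_zero) (key_ne_zero p1 p2 p3)
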